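/- Let Γ ∋ −I₂ be a finite-index subgroup of SL₂(ℤ) and ρ : Γ → GL_p(ℂ) a representation. Suppose there exists F = (F₁,…,F_p) ∈ 𝓕(k,ρ,Γ) such that the functions F₁,…,F_p are linearly independent over ℂ. Then: (1) ρ(−I₂) = I_p; (2) for every σ ∈ SL₂(ℤ) and M ∈ ℤ_{>0} with σT^Mσ^{−1} ∈ Γ, there exists N ∈ ℤ_{>0} such that (e^{2πiκM} ρ(σT^Mσ^{−1}))^N = I_p. -/

import Mathlib

noncomputable section

open Complex MeasureTheory Matrix UpperHalfPlane
open scoped Manifold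

/-- The group `SL₂(ℤ)`. -/
abbrev SL2Z := Matrix.SpecialLinearGroup (Fin 2) ℤ
/-- The group `SL₂(ℝ)`. -/
abbrev SL2R := Matrix.SpecialLinearGroup (Fin 2) ℝ

instance : MeasurableSpace ℍ := borel ℍ
instance : TopologicalSpace SL2R := TopologicalSpace.induced (fun g => g.1) inferInstance
instance : MeasurableSpace SL2R := borel SL2R

/-- The matrix `T = [[1,1],[0,1]]`. -/
def Tm : SL2Z := ⟨!![1, 1; 0, 1], by norm_num [Matrix.det_fin_two_of]⟩

/-- `n_x = [[1,x],[0,1]]`. -/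
def nMat (x : ℝ) : SL2R := ⟨!![1, x; 0, 1], by norm_num [Matrix.det_fin_two_of]⟩

/-- `a_y = diag(√y, 1/√y)` for `y > 0`. -/
def aMat (y : ℝ) (hy : 0 < y) : SL2R :=
  ⟨!![Real.sqrt y, 0; 0, (Real.sqrt y)⁻¹], by
    have h : Real.sqrt y ≠ 0 := ne_of_gt (Real.sqrt_pos.mpr hy)
    simp [Matrix.det_fin_two_of, mul_inv_cancel₀ h]⟩

/-- `κ_θ`, rotation by angle `θ`; these constitute `K = SO₂(ℝ)`. -/
def kMat (θ : ℝ) : SL2R :=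
  ⟨!![Real.cos θ, -Real.sin θ; Real.sin θ, Real.cos θ], by
    have := Real.sin_sq_add_cos_sq θ
    simp [Matrix.det_fin_two_of]; nlinarith [this]⟩

/-- The point `i ∈ ℍ`. -/
def ptI : ℍ := ⟨Complex.I, by simp⟩

/-- The automorphy factor `j(γ,τ) = cτ + d` for `γ ∈ SL₂(ℤ)`. -/
def jf (γ : SL2Z) (τ : ℍ) : ℂ := ((γ.1 1 0 : ℤ) : ℂ) * (τ : ℂ) + ((γ.1 1 1 : ℤ) : ℂ)

/-- The automorphy factor `j(g,τ) = cτ + d` for `g ∈ SL₂(ℝ)`. -/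
def jfR (g : SL2R) (τ : ℍ) : ℂ := ((g.1 1 0 : ℝ) : ℂ) * (τ : ℂ) + ((g.1 1 1 : ℝ) : ℂ)

/-- A unitary multiplier system of weight `k` for `SL₂(ℤ)`, satisfying the nontriviality
condition `v(-I₂) = (-1)^{-k}`.  Here `z ^ (k : ℂ)` is the principal complex power,
which coincides with `|z|^k e^{ik·arg z}`, `arg z ∈ (-π,π]`. -/
structure MultiplierSystem (k : ℝ) where
  v : SL2Z → ℂ
  unitary : ∀ γ, ‖v γ‖ = 1
  cocycle : ∀ γ₁ γ₂ : SL2Z, ∀ τ : ℍ,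
    v (γ₁ * γ₂) * jf (γ₁ * γ₂) τ ^ (k : ℂ) =
      v γ₁ * jf γ₁ (γ₂ • τ) ^ (k : ℂ) * (v γ₂ * jf γ₂ τ ^ (k : ℂ))
  neg_one : v (-1) = (-1 : ℂ) ^ (-k : ℂ)

/-- The standard Hermitian norm on `ℂ^ι`. -/
def hnorm {ι : Type} [Fintype ι] (x : ι → ℂ) : ℝ := Real.sqrt (∑ i, ‖x i‖ ^ 2)

/-- The standard Hermitian inner product on `ℂ^ι`. -/
def hinner {ι : Type} [Fintype ι] (x y : ι → ℂ) : ℂ := ∑ i, x i * (starRingEnd ℂ) (y i)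

/-- The slash action `(f|_k γ)(τ) = v(γ)⁻¹ j(γ,τ)^{-k} f(γ.τ)` on scalar-valued functions. -/
def slashC (k : ℝ) (ms : MultiplierSystem k) (f : ℍ → ℂ) (γ : SL2Z) : ℍ → ℂ :=
  fun τ => (ms.v γ)⁻¹ * jf γ τ ^ (-k : ℂ) * f (γ • τ)

/-- The slash action `(F|_k γ)(τ) = v(γ)⁻¹ j(γ,τ)^{-k} F(γ.τ)` on vector-valued functions. -/
def slashV (k : ℝ) (ms : MultiplierSystem k) {ι : Type} (F : ℍ → ι → ℂ) (γ : SL2Z) :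
    ℍ → ι → ℂ :=
  fun τ i => (ms.v γ)⁻¹ * jf γ τ ^ (-k : ℂ) * F (γ • τ) i

/-- The twisted slash action `F|_{k,ρ} γ := ρ(γ)⁻¹ (F|_k γ)`. -/
def slashRho (k : ℝ) (ms : MultiplierSystem k) {ι : Type} [Fintype ι] [DecidableEq ι]
    {Γ : Subgroup SL2Z} (ρ : Γ →* GL ι ℂ) (F : ℍ → ι → ℂ) (γ : Γ) : ℍ → ι → ℂ :=
  fun τ => (((ρ γ)⁻¹ : GL ι ℂ) : Matrix ι ι ℂ).mulVec (slashV k ms F (γ : SL2Z) τ)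

/-- `g` has a Fourier expansion `g(τ) = Σ_{n ≥ h} a_n e^{2πi(n/N)τ}` with lowest exponent
index `h` (for some period `N ∈ ℤ_{>0}`). -/
def HasFourierFrom (h : ℤ) (g : ℍ → ℂ) : Prop :=
  ∃ N : ℕ, 0 < N ∧ ∃ a : ℕ → ℂ, ∀ τ : ℍ,
    HasSum (fun n : ℕ =>
      a n * Complex.exp (2 * Real.pi * Complex.I * (((h + n : ℤ) : ℂ) / (N : ℂ)) * (τ : ℂ)))
      (g τ)

/-- `f ∈ 𝓕(k)`: holomorphic with suitable Fourier expansions at all cusps. -/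
def MemF (k : ℝ) (ms : MultiplierSystem k) (f : ℍ → ℂ) : Prop :=
  MDifferentiable 𝓘(ℂ) 𝓘(ℂ) f ∧ ∀ σ : SL2Z, ∃ h : ℤ, HasFourierFrom h (slashC k ms f σ)

/-- `f ∈ 𝓜(k)`: as `𝓕(k)` but with nonnegative Fourier exponents. -/
def MemM (k : ℝ) (ms : MultiplierSystem k) (f : ℍ → ℂ) : Prop :=
  MDifferentiable 𝓘(ℂ) 𝓘(ℂ) f ∧
    ∀ σ : SL2Z, ∃ h : ℤ, 0 ≤ h ∧ HasFourierFrom h (slashC k ms f σ)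

/-- `f ∈ 𝓢(k)`: as `𝓕(k)` but with strictly positive Fourier exponents. -/
def MemS (k : ℝ) (ms : MultiplierSystem k) (f : ℍ → ℂ) : Prop :=
  MDifferentiable 𝓘(ℂ) 𝓘(ℂ) f ∧
    ∀ σ : SL2Z, ∃ h : ℤ, 0 < h ∧ HasFourierFrom h (slashC k ms f σ)

/-- `F ∈ 𝓕(k,ρ,Γ)`: a vector-valued modular form of weight `k` for `Γ` w.r.t. `ρ`. -/
def MemFV (k : ℝ) (ms : MultiplierSystem k) {ι : Type} [Fintype ι] [DecidableEq ι]
    (Γ : Subgroup SL2Z) (ρ : Γ →* GL ι ℂ) (F : ℍ → ι → ℂ) : Prop :=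
  (∀ i, MemF k ms fun τ => F τ i) ∧
    ∀ γ : Γ, slashV k ms F (γ : SL2Z) =
      fun τ => ((ρ γ : GL ι ℂ) : Matrix ι ι ℂ).mulVec (F τ)

/-- `F ∈ 𝓜(k,ρ,Γ)`: an entire vector-valued modular form. -/
def MemMV (k : ℝ) (ms : MultiplierSystem k) {ι : Type} [Fintype ι] [DecidableEq ι]
    (Γ : Subgroup SL2Z) (ρ : Γ →* GL ι ℂ) (F : ℍ → ι → ℂ) : Prop :=
  (∀ i, MemM k ms fun τ => F τ i) ∧
    ∀ γ : Γ, slashV k ms F (γ : SL2Z) =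
      fun τ => ((ρ γ : GL ι ℂ) : Matrix ι ι ℂ).mulVec (F τ)

/-- `F ∈ 𝓢(k,ρ,Γ)`: a cuspidal vector-valued modular form. -/
def MemSV (k : ℝ) (ms : MultiplierSystem k) {ι : Type} [Fintype ι] [DecidableEq ι]
    (Γ : Subgroup SL2Z) (ρ : Γ →* GL ι ℂ) (F : ℍ → ι → ℂ) : Prop :=
  (∀ i, MemS k ms fun τ => F τ i) ∧
    ∀ γ : Γ, slashV k ms F (γ : SL2Z) =
      fun τ => ((ρ γ : GL ι ℂ) : Matrix ι ι ℂ).mulVec (F τ)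

/-- `ρ` is a unitary representation. -/
def IsUnitaryRep {ι : Type} [Fintype ι] [DecidableEq ι] {Γ : Subgroup SL2Z}
    (ρ : Γ →* GL ι ℂ) : Prop :=
  ∀ γ : Γ, ((ρ γ : GL ι ℂ) : Matrix ι ι ℂ) ∈ Matrix.unitaryGroup ι ℂ

/-- `ρ` is a normal representation (conditions (N1) and (N2)). -/
def IsNormalRep (κ : ℝ) {ι : Type} [Fintype ι] [DecidableEq ι] {Γ : Subgroup SL2Z}
    (ρ : Γ →* GL ι ℂ) : Prop :=
  (∀ h : (-1 : SL2Z) ∈ Γ, ((ρ ⟨-1, h⟩ : GL ι ℂ) : Matrix ι ι ℂ) = 1) ∧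
    ∀ (σ : SL2Z) (M : ℕ), 0 < M → ∀ h : σ * Tm ^ M * σ⁻¹ ∈ Γ,
      ∃ N : ℕ, 0 < N ∧
        (Complex.exp (2 * Real.pi * Complex.I * κ * M) •
          ((ρ ⟨σ * Tm ^ M * σ⁻¹, h⟩ : GL ι ℂ) : Matrix ι ι ℂ)) ^ N = 1

/-- The `SL₂(ℝ)`-invariant measure `dv(x+iy) = dx dy / y²` on `ℍ`. -/
def hyp : Measure ℍ :=
  Measure.comap (fun τ : ℍ => (τ : ℂ))
    ((volume : Measure ℂ).withDensity fun z => ENNReal.ofReal (1 / z.im ^ 2))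

/-- `R ⊆ Γ` is a complete set of representatives for the right cosets `Λ\Γ`. -/
def IsRepSet {Γ : Subgroup SL2Z} (Λ : Subgroup SL2Z) (R : Set Γ) : Prop :=
  ∀ γ : Γ, ∃! r, r ∈ R ∧ ((γ * r⁻¹ : Γ) : SL2Z) ∈ Λ

/-- The Poincaré series `P_{Λ\Γ,ρ} f = Σ_{γ ∈ Λ\Γ} f|_{k,ρ}γ`, summed over a set `R` of
representatives of `Λ\Γ`. -/
def PSeries (k : ℝ) (ms : MultiplierSystem k) {ι : Type} [Fintype ι] [DecidableEq ι]
    {Γ : Subgroup SL2Z} (ρ : Γ →* GL ι ℂ) (R : Set Γ) (f : ℍ → ι → ℂ) : ℍ → ι → ℂ :=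
  fun τ i => ∑' r : R, slashRho k ms ρ f (r : Γ) τ i

/-- The saturation `Λ.A` of a subset `A ⊆ ℍ` under a subgroup `Λ ≤ SL₂(ℤ)`. -/
def orbH (Λ : Subgroup SL2Z) (A : Set ℍ) : Set ℍ :=
  {τ | ∃ l ∈ Λ, ∃ a ∈ A, (l : SL2Z) • a = τ}

/-- The embedding `SL₂(ℤ) → SL₂(ℝ)`. -/
def toR : SL2Z →* SL2R := Matrix.SpecialLinearGroup.map (Int.castRingHom ℝ)

/-- The saturation `Λ.C` of a subset `C ⊆ SL₂(ℝ)` under left translation by `Λ ≤ SL₂(ℤ)`. -/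
def orbG (Λ : Subgroup SL2Z) (C : Set SL2R) : Set SL2R :=
  {g | ∃ l ∈ Λ, ∃ c ∈ C, toR l * c = g}

/-- `D` is a fundamental domain for the action of `Λ ≤ SL₂(ℤ)` on `ℍ`, w.r.t. the
invariant measure `dv`. -/
def IsFundDomH (Λ : Subgroup SL2Z) (D : Set ℍ) : Prop :=
  NullMeasurableSet D hyp ∧ (∀ᵐ τ ∂hyp, ∃ l ∈ Λ, (l : SL2Z) • τ ∈ D) ∧
    ∀ l₁ l₂ : SL2Z, l₁ ∈ Λ → l₂ ∈ Λ → l₁ ≠ l₂ →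
      AEDisjoint hyp ((fun τ => l₁ • τ) '' D) ((fun τ => l₂ • τ) '' D)

/-- `E` is a fundamental domain for the left translation action of `Λ ≤ SL₂(ℤ)` on
`SL₂(ℝ)`, w.r.t. the measure `μ`. -/
def IsFundDomG (Λ : Subgroup SL2Z) (μ : Measure SL2R) (E : Set SL2R) : Prop :=
  NullMeasurableSet E μ ∧ (∀ᵐ g ∂μ, ∃ l ∈ Λ, toR l * g ∈ E) ∧
    ∀ l₁ l₂ : SL2Z, l₁ ∈ Λ → l₂ ∈ Λ → l₁ ≠ l₂ →
      AEDisjoint μ ((fun g => toR l₁ * g) '' E) ((fun g => toR l₂ * g) '' E)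

/-- `μG` is the Haar measure on `SL₂(ℝ)` with the normalization
`∫_{SL₂(ℝ)} φ(g) dg = (1/2π) ∫₀^{2π} ∫_ℍ φ(n_x a_y κ_θ) dv(x+iy) dθ`. -/
def IsHaarNorm (μG : Measure SL2R) : Prop :=
  ∀ φ : SL2R → ℝ, Continuous φ → HasCompactSupport φ →
    ∫ g, φ g ∂μG =
      (1 / (2 * Real.pi)) *
        ∫ θ in (0:ℝ)..(2 * Real.pi), ∫ τ : ℍ, φ (nMat τ.re * aMat τ.im τ.im_pos * kMat θ) ∂hyp

set_option maxHeartbeats 1000000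

/-! Since `-I₂` fixes every point of `ℍ` and `v(-I₂) = (-1)^{-k}`, the slash action of `-I₂` is
trivial, so `F = F|(-I₂) = ρ(-I₂) F` and linear independence of the components forces
`ρ(-I₂) = 1`. For the second condition put `G = F|σ`; its components are again linearly
independent, and `F|(σ T^M σ⁻¹) = ρ(σ T^M σ⁻¹) F` turns into
`G(τ + M) = e^{2πiκM} ρ(σ T^M σ⁻¹) G(τ)`. Each component of `G` is periodic by its Fourier
expansion, so at a common period `N M` the matrix `(e^{2πiκM} ρ(σ T^M σ⁻¹))^N` fixes `G(τ)` for
all `τ`, hence is the identity. -/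

section LinearIndependence

variable {R X ι : Type*} [Fintype ι]

lemma LinearIndependent.mul_comp_surjective [CommRing R] [NoZeroDivisors R] {Y : Type*}
    {f : ι → Y → R} (hf : LinearIndependent R f) {c : X → R} (hc : ∀ x, c x ≠ 0) {φ : X → Y}
    (hφ : Function.Surjective φ) : LinearIndependent R fun i x => c x * f i (φ x) := by
  rw [Fintype.linearIndependent_iff] at hf ⊢
  intro a ha
  refine hf a (funext fun y => ?_)
  obtain ⟨x, rfl⟩ := hφ y
  have hx : c x * ∑ i, a i * f i (φ x) = 0 := by
    simpa [Finset.mul_sum, mul_left_comm] using congrFun ha x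
  simpa using (mul_eq_zero.mp hx).resolve_left (hc x)

lemma eq_one_of_forall_mulVec_eq_self [Ring R] [DecidableEq ι] {f : X → ι → R}
    (hf : LinearIndependent R fun i x => f x i) {A : Matrix ι ι R}
    (hA : ∀ x, A *ᵥ f x = f x) : A = 1 := by
  ext i j
  refine sub_eq_zero.mp <| Fintype.linearIndependent_iff.mp hf
    (fun l => A i l - (1 : Matrix ι ι R) i l) (funext fun x => ?_) j
  have hx := congrFun (hA x) i
  simp only [Matrix.mulVec, dotProduct] at hx
  simp [sub_mul, Finset.sum_sub_distrib, Matrix.one_apply, hx]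

end LinearIndependence

section Action

variable {G X Y : Type*} [Monoid G] [MulAction G X]

lemma pow_smul_invariant {f : X → Y} {g : G} (h : ∀ x, f (g • x) = f x) (n : ℕ) (x : X) :
    f (g ^ n • x) = f x := by
  induction n generalizing x with
  | zero => rw [pow_zero, one_smul]
  | succ n ih => rw [pow_succ, mul_smul, ih, h]

lemma exists_pow_smul_invariant {ι : Type*} [Fintype ι] {f : X → ι → Y} {g : G}
    (h : ∀ i, ∃ N > 0, ∀ x, f (g ^ N • x) i = f x i) : ∃ N > 0, ∀ x, f (g ^ N • x) = f x := by
  choose N hN hf using h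
  refine ⟨∏ i, N i, Finset.prod_pos fun i _ => hN i, fun x => funext fun i => ?_⟩
  obtain ⟨c, hc⟩ := Finset.dvd_prod_of_mem N (Finset.mem_univ i)
  rw [hc, pow_mul]
  exact pow_smul_invariant (f := fun x => f x i) (hf i) c x

lemma pow_smul_eq_pow_mulVec {R ι : Type*} [Semiring R] [Fintype ι] [DecidableEq ι]
    {f : X → ι → R} {g : G} {A : Matrix ι ι R} (h : ∀ x, f (g • x) = A *ᵥ f x) (n : ℕ) (x : X) :
    f (g ^ n • x) = (A ^ n) *ᵥ f x := by
  induction n generalizing x with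
  | zero => rw [pow_zero, one_smul, pow_zero, Matrix.one_mulVec]
  | succ n ih => rw [pow_succ, mul_smul, ih, h, Matrix.mulVec_mulVec, ← pow_succ]

end Action

lemma jf_ne_zero (γ : SL2Z) (τ : ℍ) : jf γ τ ≠ 0 := by
  have h : jf γ τ = UpperHalfPlane.denom γ τ := by rw [ModularGroup.denom_apply]; rfl
  exact h ▸ UpperHalfPlane.denom_ne_zero _ _

lemma coe_Tm_pow (m : ℕ) : ((Tm ^ m : SL2Z) : Matrix (Fin 2) (Fin 2) ℤ) = !![1, (m : ℤ); 0, 1] := by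
  change ((ModularGroup.T ^ m : SL2Z) : Matrix (Fin 2) (Fin 2) ℤ) = _
  rw [← zpow_natCast]
  exact ModularGroup.coe_T_zpow m

lemma coe_Tm_pow_smul (m : ℕ) (τ : ℍ) : ((Tm ^ m • τ : ℍ) : ℂ) = τ + m := by
  change ((ModularGroup.T ^ m • τ : ℍ) : ℂ) = _
  rw [← zpow_natCast, ModularGroup.coe_T_zpow_smul_eq, Int.cast_natCast]

lemma jf_Tm_pow (m : ℕ) (τ : ℍ) : jf (Tm ^ m) τ = 1 := by
  rw [jf, coe_Tm_pow]
  simp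

lemma jf_one (τ : ℍ) : jf 1 τ = 1 := by
  simpa using jf_Tm_pow 0 τ

lemma jf_neg_one (τ : ℍ) : jf (-1) τ = -1 := by
  simp [jf]

namespace MultiplierSystem

variable {k : ℝ} (ms : MultiplierSystem k)

lemma v_ne_zero (γ : SL2Z) : ms.v γ ≠ 0 :=
  norm_ne_zero_iff.mp (by simp [ms.unitary γ])

lemma v_one : ms.v 1 = 1 := by
  have h := ms.cocycle 1 1 ptI
  simp only [mul_one, one_smul, jf_one, Complex.one_cpow] at h
  exact (mul_eq_right₀ (ms.v_ne_zero 1)).mp h.symm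

lemma v_Tm_pow (m : ℕ) : ms.v (Tm ^ m) = ms.v Tm ^ m := by
  induction m with
  | zero => exact ms.v_one
  | succ m ih =>
    have h := ms.cocycle (Tm ^ m) (Tm ^ 1) ptI
    rw [← pow_add, jf_Tm_pow, jf_Tm_pow, jf_Tm_pow] at h
    simp only [Complex.one_cpow, mul_one, pow_one] at h
    rw [h, ih, pow_succ]

end MultiplierSystem

section Slash

variable {k : ℝ} (ms : MultiplierSystem k) {ι : Type}

lemma slashV_apply (F : ℍ → ι → ℂ) (γ : SL2Z) (τ : ℍ) :
    slashV k ms F γ τ = ((ms.v γ)⁻¹ * jf γ τ ^ (-k : ℂ)) • F (γ • τ) :=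
  rfl

lemma slashV_mul (F : ℍ → ι → ℂ) (γ₁ γ₂ : SL2Z) :
    slashV k ms F (γ₁ * γ₂) = slashV k ms (slashV k ms F γ₁) γ₂ := by
  funext τ
  simp only [slashV_apply]
  rw [mul_smul γ₁ γ₂ τ, smul_smul (M := ℂ)]
  congr 1
  simp only [Complex.cpow_neg]
  rw [← mul_inv, ms.cocycle]
  simp only [mul_inv]
  ring

lemma slashV_neg_one (F : ℍ → ι → ℂ) : slashV k ms F (-1) = F := by
  funext τ
  rw [slashV_apply, ModularGroup.SL_neg_smul, one_smul, jf_neg_one, ← ms.neg_one,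
    inv_mul_cancel₀ (ms.v_ne_zero _), one_smul]

lemma slashV_Tm_pow (F : ℍ → ι → ℂ) (m : ℕ) (τ : ℍ) :
    slashV k ms F (Tm ^ m) τ = (ms.v Tm ^ m)⁻¹ • F (Tm ^ m • τ) := by
  rw [slashV_apply, jf_Tm_pow, Complex.one_cpow, mul_one, ms.v_Tm_pow]

variable [Fintype ι]

lemma slashV_mulVec (A : Matrix ι ι ℂ) (F : ℍ → ι → ℂ) (γ : SL2Z) :
    slashV k ms (fun τ => A *ᵥ F τ) γ = fun τ => A *ᵥ slashV k ms F γ τ := by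
  funext τ
  simp only [slashV_apply, Matrix.mulVec_smul]

lemma slashV_slashV_conj {A : Matrix ι ι ℂ} {F : ℍ → ι → ℂ} {γ : SL2Z}
    (h : slashV k ms F γ = fun τ => A *ᵥ F τ) (σ : SL2Z) :
    slashV k ms (slashV k ms F σ) (σ⁻¹ * γ * σ) = fun τ => A *ᵥ slashV k ms F σ τ := by
  rw [← slashV_mul, show σ * (σ⁻¹ * γ * σ) = γ * σ by group, slashV_mul, h, slashV_mulVec]

lemma linearIndependent_slashV {F : ℍ → ι → ℂ} (hF : LinearIndependent ℂ fun i τ => F τ i) (σ : SL2Z) :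
    LinearIndependent ℂ fun i τ => slashV k ms F σ τ i :=
  hF.mul_comp_surjective
    (fun τ => mul_ne_zero (inv_ne_zero (ms.v_ne_zero σ))
      (Complex.cpow_ne_zero_iff.mpr (Or.inl (jf_ne_zero σ τ))))
    (MulAction.surjective σ)

end Slash

lemma HasFourierFrom.exists_Tm_pow_invariant {h : ℤ} {g : ℍ → ℂ} (hg : HasFourierFrom h g) :
    ∃ N > 0, ∀ τ, g (Tm ^ N • τ) = g τ := by
  obtain ⟨N, hN, a, ha⟩ := hg
  refine ⟨N, hN, fun τ => HasSum.unique (ha (Tm ^ N • τ)) ?_⟩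
  convert ha τ using 2 with n
  have : (N : ℂ) ≠ 0 := Nat.cast_ne_zero.mpr hN.ne'
  rw [coe_Tm_pow_smul, show 2 * (Real.pi : ℂ) * Complex.I * (((h + n : ℤ) : ℂ) / N) * (τ + N) =
      2 * Real.pi * Complex.I * (((h + n : ℤ) : ℂ) / N) * τ + (h + n : ℤ) * (2 * Real.pi * Complex.I)
      by field_simp, Complex.exp_add, Complex.exp_int_mul_two_pi_mul_I, mul_one]

namespace MemFV

variable {k : ℝ} {ms : MultiplierSystem k} {ι : Type} [Fintype ι] [DecidableEq ι]
  {Γ : Subgroup SL2Z} {ρ : Γ →* GL ι ℂ} {F : ℍ → ι → ℂ}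

lemma rho_neg_one_eq_one (hF : MemFV k ms Γ ρ F) (hind : LinearIndependent ℂ fun i τ => F τ i)
    (hneg : (-1 : SL2Z) ∈ Γ) : ((ρ ⟨-1, hneg⟩ : GL ι ℂ) : Matrix ι ι ℂ) = 1 :=
  eq_one_of_forall_mulVec_eq_self hind fun τ =>
    (congrFun (hF.2 ⟨-1, hneg⟩) τ).symm.trans (congrFun (slashV_neg_one ms F) τ)

lemma exists_pow_smul_rho_eq_one (hF : MemFV k ms Γ ρ F)
    (hind : LinearIndependent ℂ fun i τ => F τ i) (σ : SL2Z) (M : ℕ)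
    (h : σ * Tm ^ M * σ⁻¹ ∈ Γ) :
    ∃ N > 0, (ms.v Tm ^ M • ((ρ ⟨σ * Tm ^ M * σ⁻¹, h⟩ : GL ι ℂ) : Matrix ι ι ℂ)) ^ N = 1 := by
  set G := slashV k ms F σ
  have hshift : ∀ τ, G (Tm ^ M • τ) =
      (ms.v Tm ^ M • ((ρ ⟨σ * Tm ^ M * σ⁻¹, h⟩ : GL ι ℂ) : Matrix ι ι ℂ)) *ᵥ G τ := fun τ => by
    have hconj := congrFun (slashV_slashV_conj ms (hF.2 ⟨_, h⟩) σ) τ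
    rw [show σ⁻¹ * (σ * Tm ^ M * σ⁻¹) * σ = Tm ^ M by group, slashV_Tm_pow,
      inv_smul_eq_iff₀ (pow_ne_zero _ (ms.v_ne_zero _))] at hconj
    rw [Matrix.smul_mulVec]
    exact hconj
  obtain ⟨N, hN, hper⟩ : ∃ N > 0, ∀ τ, G ((Tm ^ M) ^ N • τ) = G τ :=
    exists_pow_smul_invariant fun i => by
      obtain ⟨_, hfourier⟩ := (hF.1 i).2 σ
      obtain ⟨N, hN, hperiodic⟩ := hfourier.exists_Tm_pow_invariant
      refine ⟨N, hN, fun τ => ?_⟩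
      rw [pow_right_comm]
      exact pow_smul_invariant (f := fun τ => G τ i) hperiodic M τ
  refine ⟨N, hN, eq_one_of_forall_mulVec_eq_self (linearIndependent_slashV ms hind σ) fun τ => ?_⟩
  rw [← pow_smul_eq_pow_mulVec hshift, hper]

end MemFV

theorem normality_conditions_of_linearIndependent_general
    {ι : Type} [Fintype ι] [DecidableEq ι]
    (k κ : ℝ) (ms : MultiplierSystem k)
    (hκT : ms.v Tm = Complex.exp (2 * Real.pi * Complex.I * κ))
    (Γ : Subgroup SL2Z) (hneg : (-1 : SL2Z) ∈ Γ)
    (ρ : Γ →* GL ι ℂ)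
    (F : ℍ → ι → ℂ) (hF : MemFV k ms Γ ρ F)
    (hind : LinearIndependent ℂ fun i : ι => (fun τ => F τ i : ℍ → ℂ)) :
    ((ρ ⟨-1, hneg⟩ : GL ι ℂ) : Matrix ι ι ℂ) = 1 ∧
      ∀ (σ : SL2Z) (M : ℕ), 0 < M → ∀ h : σ * Tm ^ M * σ⁻¹ ∈ Γ,
        ∃ N : ℕ, 0 < N ∧
          (Complex.exp (2 * Real.pi * Complex.I * κ * M) •
            ((ρ ⟨σ * Tm ^ M * σ⁻¹, h⟩ : GL ι ℂ) : Matrix ι ι ℂ)) ^ N = 1 := by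
  refine ⟨hF.rho_neg_one_eq_one hind hneg, fun σ M _ h => ?_⟩
  have hvM : ms.v Tm ^ M = Complex.exp (2 * Real.pi * Complex.I * κ * M) := by
    rw [hκT, ← Complex.exp_nat_mul, mul_comm]
  exact hvM ▸ hF.exists_pow_smul_rho_eq_one hind σ M h

theorem normality_conditions_of_linearIndependent
    {ι : Type} [Fintype ι] [DecidableEq ι]
    (k κ : ℝ) (ms : MultiplierSystem k)
    (hκ : κ ∈ Set.Ico (0:ℝ) 1)
    (hκT : ms.v Tm = Complex.exp (2 * Real.pi * Complex.I * κ))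
    (Γ : Subgroup SL2Z) (hneg : (-1 : SL2Z) ∈ Γ) (hfin : Γ.FiniteIndex)
    (ρ : Γ →* GL ι ℂ)
    (F : ℍ → ι → ℂ) (hF : MemFV k ms Γ ρ F)
    (hind : LinearIndependent ℂ fun i : ι => (fun τ => F τ i : ℍ → ℂ)) :
    ((ρ ⟨-1, hneg⟩ : GL ι ℂ) : Matrix ι ι ℂ) = 1 ∧
      ∀ (σ : SL2Z) (M : ℕ), 0 < M → ∀ h : σ * Tm ^ M * σ⁻¹ ∈ Γ,
        ∃ N : ℕ, 0 < N ∧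
          (Complex.exp (2 * Real.pi * Complex.I * κ * M) •
            ((ρ ⟨σ * Tm ^ M * σ⁻¹, h⟩ : GL ι ℂ) : Matrix ι ι ℂ)) ^ N = 1 :=
  normality_conditions_of_linearIndependent_general k κ ms hκT Γ hneg ρ F hF hind
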